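/- arXiv:math/0210255 — 2 statements merged into one kernel-verified Lean document; each statement's English description precedes it below -/
import Mathlib

section
/- Let $0 < x_i < 1$ for $i = 1,\dots,m$ and $0 < y_j < 1$ for $j = 1,\dots,n$, and let $\phi(z) = \prod_{i=1}^m \frac{1+x_i z}{1-x_i z} \cdot \prod_{j=1}^n \frac{1+y_j z^{-1}}{1-y_j z^{-1}}$ on the unit circle $|z|=1$. Then $\sum_{k=1}^\infty k\,(\log\phi)_k\,(\log\phi)_{-k} = 2 \sum_{i=1}^m \sum_{j=1}^n \log\frac{1+x_i y_j}{1-x_i y_j}$, where $(\log\phi)_k$ denotes the $k$-th Fourier coefficient of $\log\phi$. -/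
/-!
Expanding every factor as `log ((1 + w) / (1 - w)) = ∑ₙ (wⁿ - (-w)ⁿ) / n` gives an explicit
absolutely convergent Fourier series `∑ b_k e^{ikθ}` whose exponential is `φ`. Its difference with
`∑ a_k e^{ikθ}` is continuous with values in `2πiℤ`, hence constant, so integrating against
`e^{-ikθ}` gives `a_k = b_k` for `k ≠ 0`. Finally `n b_n b_{-n}` is twice the `n`-th term of the
same expansion for the products `xᵢ yⱼ`, because
`(uⁿ - (-u)ⁿ) (vⁿ - (-v)ⁿ) = 2 ((uv)ⁿ - (-uv)ⁿ)`.
-/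

open Complex
open scoped Real

lemma sub_eq_of_exp_eq {X : Type*} [TopologicalSpace X] [PreconnectedSpace X] {f g : X → ℂ}
    (hf : Continuous f) (hg : Continuous g) (h : ∀ x, exp (f x) = exp (g x)) (x y : X) :
    f x - g x = f y - g y := by
  have hT : IsDiscrete (AddSubgroup.zmultiples (2 * π * I) : Set ℂ) :=
    isDiscrete_iff_discreteTopology.mpr (NormedSpace.discreteTopology_zmultiples _)
  refine isPreconnected_univ.constant_of_mapsTo hT (hf.sub hg).continuousOn
    (fun z _ => ?_) trivial trivial
  obtain ⟨n, hn⟩ := exp_eq_exp_iff_exists_int.mp (h z)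
  exact AddSubgroup.mem_zmultiples_iff.mpr ⟨n, by rw [zsmul_eq_mul, Pi.sub_apply, hn]; ring⟩

lemma norm_exp_ofReal_mul_ofReal_mul_I (t θ : ℝ) : ‖exp (t * θ * I)‖ = 1 := by
  exact_mod_cast norm_exp_ofReal_mul_I (t * θ)

lemma norm_exp_intCast_mul_ofReal_mul_I (k : ℤ) (θ : ℝ) : ‖exp (k * θ * I)‖ = 1 := by
  exact_mod_cast norm_exp_ofReal_mul_ofReal_mul_I k θ

lemma integral_exp_intCast_mul_ofReal_mul_I (m : ℤ) :
    ∫ θ in (0 : ℝ)..2 * π, exp (m * θ * I) = if m = 0 then (2 * π : ℂ) else 0 := by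
  split_ifs with hm
  · simp [hm]
  have hmI : (m : ℂ) * I ≠ 0 := by simp [hm]
  simp_rw [mul_right_comm _ _ I]
  rw [integral_exp_mul_complex hmI, ofReal_zero, mul_zero, exp_zero,
    show (m : ℂ) * I * (2 * π : ℝ) = m * (2 * π * I) by push_cast; ring,
    exp_int_mul_two_pi_mul_I, sub_self, zero_div]

noncomputable def trigSeries (c : ℤ → ℂ) (θ : ℝ) : ℂ := ∑' k : ℤ, c k * exp (k * θ * I)

section TrigSeries

variable {c d : ℤ → ℂ}

lemma summable_trigSeries (hc : Summable (‖c ·‖)) (θ : ℝ) :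
    Summable fun k : ℤ => c k * exp (k * θ * I) :=
  .of_norm (by simpa [norm_exp_intCast_mul_ofReal_mul_I] using hc)

lemma continuous_trigSeries (hc : Summable (‖c ·‖)) : Continuous (trigSeries c) :=
  continuous_tsum (fun k => by fun_prop) hc fun k θ => by
    rw [norm_mul, norm_exp_intCast_mul_ofReal_mul_I, mul_one]

lemma trigSeries_sub (hc : Summable (‖c ·‖)) (hd : Summable (‖d ·‖)) (θ : ℝ) :
    trigSeries (c - d) θ = trigSeries c θ - trigSeries d θ := by
  simp only [trigSeries, Pi.sub_apply, sub_mul]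
  exact (summable_trigSeries hc θ).tsum_sub (summable_trigSeries hd θ)

lemma integral_trigSeries_mul_exp (hc : Summable (‖c ·‖)) (k : ℤ) :
    ∫ θ in (0 : ℝ)..2 * π, trigSeries c θ * exp (-k * θ * I) = 2 * π * c k := by
  have hk (θ : ℝ) : ‖exp (-k * θ * I)‖ = 1 := by
    exact_mod_cast norm_exp_ofReal_mul_ofReal_mul_I (-k) θ
  have hterm (n : ℤ) : ∫ θ in (0 : ℝ)..2 * π, c n * exp (n * θ * I) * exp (-k * θ * I)
      = if n = k then 2 * π * c k else 0 := by
    have (θ : ℝ) :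
        c n * exp (n * θ * I) * exp (-k * θ * I) = c n * exp ((n - k : ℤ) * θ * I) := by
      rw [mul_assoc, ← exp_add]; push_cast; ring_nf
    simp_rw [this, intervalIntegral.integral_const_mul, integral_exp_intCast_mul_ofReal_mul_I,
      sub_eq_zero]
    split_ifs with h <;> simp [h, mul_comm]
  have hsum : HasSum
      (fun n : ℤ => ∫ θ in (0 : ℝ)..2 * π, c n * exp (n * θ * I) * exp (-k * θ * I))
      (∫ θ in (0 : ℝ)..2 * π, trigSeries c θ * exp (-k * θ * I)) :=
    intervalIntegral.hasSum_integral_of_dominated_convergence (fun n _ => ‖c n‖)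
      (fun n => (by fun_prop : Continuous _).aestronglyMeasurable)
      (fun n => .of_forall fun θ _ => by
        rw [norm_mul, norm_mul, norm_exp_intCast_mul_ofReal_mul_I, hk, mul_one, mul_one])
      (.of_forall fun θ _ => hc) intervalIntegrable_const
      (.of_forall fun θ _ => (summable_trigSeries hc θ).hasSum.mul_right _)
  simp_rw [hterm] at hsum
  exact hsum.unique (hasSum_ite_eq k _)

lemma eq_zero_of_trigSeries_eq_const {C : ℂ} (hc : Summable (‖c ·‖))
    (h : ∀ θ, trigSeries c θ = C) {k : ℤ} (hk : k ≠ 0) : c k = 0 := by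
  have := integral_trigSeries_mul_exp hc k
  have h0 : -(k : ℂ) = ((-k : ℤ) : ℂ) := by push_cast; ring
  simp_rw [h, h0] at this
  rw [intervalIntegral.integral_const_mul, integral_exp_intCast_mul_ofReal_mul_I,
    if_neg (neg_ne_zero.mpr hk), mul_zero] at this
  have hπ : (2 * π : ℂ) ≠ 0 := by exact_mod_cast Real.two_pi_pos.ne'
  exact (mul_eq_zero.mp this.symm).resolve_left hπ

lemma eq_of_exp_trigSeries_eq (hc : Summable (‖c ·‖)) (hd : Summable (‖d ·‖))
    (h : ∀ θ, exp (trigSeries c θ) = exp (trigSeries d θ)) {k : ℤ} (hk : k ≠ 0) :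
    c k = d k := by
  refine sub_eq_zero.mp (eq_zero_of_trigSeries_eq_const (c := c - d)
    (C := trigSeries c 0 - trigSeries d 0) ?_ (fun θ => ?_) hk)
  · exact .of_nonneg_of_le (fun _ => norm_nonneg _) (fun k => norm_sub_le _ _) (hc.add hd)
  · rw [trigSeries_sub hc hd,
      sub_eq_of_exp_eq (continuous_trigSeries hc) (continuous_trigSeries hd) h θ 0]

end TrigSeries

lemma hasSum_log_one_add_sub_log_one_sub {w : ℂ} (hw : ‖w‖ < 1) :
    HasSum (fun n : ℕ => (w ^ n - (-w) ^ n) / n) (log (1 + w) - log (1 - w)) := by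
  have := (hasSum_taylorSeries_neg_log hw).sub
    (hasSum_taylorSeries_neg_log (z := -w) (by rwa [norm_neg]))
  simpa only [sub_div, sub_neg_eq_add, neg_sub_neg, neg_add_eq_sub] using this

lemma exp_log_one_add_sub_log_one_sub {w : ℂ} (hw : ‖w‖ < 1) :
    exp (log (1 + w) - log (1 - w)) = (1 + w) / (1 - w) := by
  have h₁ : 1 + w ≠ 0 := fun h => by simp [eq_neg_of_add_eq_zero_right h] at hw
  have h₂ : 1 - w ≠ 0 := fun h => by simp [← sub_eq_zero.mp h] at hw
  rw [exp_sub, exp_log h₁, exp_log h₂]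

lemma ofReal_log_div_one_add_one_sub {t : ℝ} (ht : |t| < 1) :
    (Real.log ((1 + t) / (1 - t)) : ℂ) = log (1 + t) - log (1 - t) := by
  obtain ⟨h₁, h₂⟩ := abs_lt.mp ht
  rw [Real.log_div (by linarith) (by linarith), ofReal_sub,
    ofReal_log (by linarith), ofReal_log (by linarith)]
  push_cast
  rfl

lemma norm_pow_sub_neg_pow_div_le (w : ℂ) (n : ℕ) :
    ‖(w ^ n - (-w) ^ n) / n‖ ≤ 2 * ‖w‖ ^ n := by
  rcases n.eq_zero_or_pos with rfl | hn
  · simp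
  calc ‖(w ^ n - (-w) ^ n) / n‖ ≤ ‖w ^ n - (-w) ^ n‖ := by
        rw [norm_div, Complex.norm_natCast]
        exact div_le_self (norm_nonneg _) (by exact_mod_cast hn)
    _ ≤ ‖w ^ n‖ + ‖(-w) ^ n‖ := norm_sub_le _ _
    _ = 2 * ‖w‖ ^ n := by rw [norm_pow, norm_pow, norm_neg]; ring

lemma pow_sub_neg_pow_mul_pow_sub_neg_pow {R : Type*} [CommRing R] (u v : R) (n : ℕ) :
    (u ^ n - (-u) ^ n) * (v ^ n - (-v) ^ n) = 2 * ((u * v) ^ n - (-(u * v)) ^ n) := by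
  rcases n.even_or_odd with hn | hn <;> simp only [hn.neg_pow, mul_pow] <;> ring

/-- `(xⁿ - (-x)ⁿ) / n` is `2 xⁿ / n` for odd `n` and `0` for even `n`, including `n = 0`. -/
noncomputable def logCoeff {ι : Type*} [Fintype ι] (x : ι → ℂ) (n : ℕ) : ℂ :=
  ∑ i, (x i ^ n - (-x i) ^ n) / n

section LogCoeff

variable {ι κ : Type*} [Fintype ι] [Fintype κ] {x : ι → ℂ} {y : κ → ℂ}

@[simp]
lemma logCoeff_zero (x : ι → ℂ) : logCoeff x 0 = 0 := by
  simp [logCoeff]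

lemma logCoeff_mul_pow (x : ι → ℂ) (ζ : ℂ) (n : ℕ) :
    logCoeff x n * ζ ^ n = logCoeff (fun i => x i * ζ) n := by
  simp only [logCoeff, Finset.sum_mul]
  congr! 1 with i
  ring

lemma hasSum_logCoeff (hx : ∀ i, ‖x i‖ < 1) :
    HasSum (logCoeff x) (∑ i, (log (1 + x i) - log (1 - x i))) :=
  hasSum_sum fun i _ => hasSum_log_one_add_sub_log_one_sub (hx i)

lemma summable_norm_logCoeff (hx : ∀ i, ‖x i‖ < 1) : Summable (‖logCoeff x ·‖) :=
  .of_nonneg_of_le (fun _ => norm_nonneg _)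
    (fun n => (norm_sum_le _ _).trans (Finset.sum_le_sum fun i _ =>
      norm_pow_sub_neg_pow_div_le (x i) n))
    (summable_sum fun i _ =>
      (summable_geometric_of_lt_one (norm_nonneg _) (hx i)).mul_left 2)

lemma natCast_mul_logCoeff_mul_logCoeff (x : ι → ℂ) (y : κ → ℂ) (n : ℕ) :
    n * logCoeff x n * logCoeff y n = 2 * logCoeff (fun p : ι × κ => x p.1 * y p.2) n := by
  rcases eq_or_ne n 0 with rfl | hn
  · simp
  have hn' : (n : ℂ) ≠ 0 := by exact_mod_cast hn
  rw [logCoeff, logCoeff, logCoeff, Fintype.sum_prod_type, mul_assoc, Finset.sum_mul_sum,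
    Finset.mul_sum, Finset.mul_sum]
  congr! 1 with i -
  rw [Finset.mul_sum, Finset.mul_sum]
  congr! 1 with j -
  rw [div_mul_div_comm, pow_sub_neg_pow_mul_pow_sub_neg_pow]
  field_simp

lemma hasSum_natCast_mul_logCoeff_mul_logCoeff (hx : ∀ i, ‖x i‖ < 1) (hy : ∀ j, ‖y j‖ < 1) :
    HasSum (fun n : ℕ => n * logCoeff x n * logCoeff y n)
      (2 * ∑ i, ∑ j, (log (1 + x i * y j) - log (1 - x i * y j))) := by
  have hxy (p : ι × κ) : ‖x p.1 * y p.2‖ < 1 := by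
    rw [norm_mul]
    exact mul_lt_one_of_nonneg_of_lt_one_left (norm_nonneg _) (hx _) (hy _).le
  simp_rw [natCast_mul_logCoeff_mul_logCoeff, ← Fintype.sum_prod_type']
  exact (hasSum_logCoeff hxy).mul_left 2

end LogCoeff

noncomputable def logSeriesCoeff {ι κ : Type*} [Fintype ι] [Fintype κ] (x : ι → ℂ)
    (y : κ → ℂ) (k : ℤ) : ℂ :=
  logCoeff x k.toNat + logCoeff y (-k).toNat

section LogSeriesCoeff

variable {ι κ : Type*} [Fintype ι] [Fintype κ] {x : ι → ℂ} {y : κ → ℂ}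

@[simp]
lemma logSeriesCoeff_zero (x : ι → ℂ) (y : κ → ℂ) : logSeriesCoeff x y 0 = 0 := by
  simp [logSeriesCoeff]

@[simp]
lemma logSeriesCoeff_natCast (x : ι → ℂ) (y : κ → ℂ) (n : ℕ) :
    logSeriesCoeff x y n = logCoeff x n := by
  simp [logSeriesCoeff]

@[simp]
lemma logSeriesCoeff_neg_natCast (x : ι → ℂ) (y : κ → ℂ) (n : ℕ) :
    logSeriesCoeff x y (-n) = logCoeff y n := by
  simp [logSeriesCoeff]

lemma summable_norm_logSeriesCoeff (hx : ∀ i, ‖x i‖ < 1) (hy : ∀ j, ‖y j‖ < 1) :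
    Summable (‖logSeriesCoeff x y ·‖) :=
  .of_nat_of_neg (by simpa using summable_norm_logCoeff hx)
    (by simpa using summable_norm_logCoeff hy)

lemma hasSum_logSeriesCoeff_mul_zpow (hx : ∀ i, ‖x i‖ < 1) (hy : ∀ j, ‖y j‖ < 1) {ζ : ℂ}
    (hζ : ‖ζ‖ = 1) :
    HasSum (fun k : ℤ => logSeriesCoeff x y k * ζ ^ k)
      ((∑ i, (log (1 + x i * ζ) - log (1 - x i * ζ)))
        + ∑ j, (log (1 + y j * ζ⁻¹) - log (1 - y j * ζ⁻¹))) := by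
  have hxζ (i : ι) : ‖x i * ζ‖ < 1 := by simpa [hζ] using hx i
  have hyζ (j : κ) : ‖y j * ζ⁻¹‖ < 1 := by simpa [hζ] using hy j
  simpa using HasSum.of_nat_of_neg (f := fun k : ℤ => logSeriesCoeff x y k * ζ ^ k)
    (by simpa [logCoeff_mul_pow] using hasSum_logCoeff hxζ)
    (by simpa [← inv_pow, logCoeff_mul_pow] using hasSum_logCoeff hyζ)

lemma exp_trigSeries_logSeriesCoeff (hx : ∀ i, ‖x i‖ < 1) (hy : ∀ j, ‖y j‖ < 1) (θ : ℝ) :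
    exp (trigSeries (logSeriesCoeff x y) θ)
      = (∏ i, (1 + x i * exp (θ * I)) / (1 - x i * exp (θ * I)))
        * ∏ j, (1 + y j * (exp (θ * I))⁻¹) / (1 - y j * (exp (θ * I))⁻¹) := by
  have hζ := norm_exp_ofReal_mul_I θ
  simp_rw [trigSeries, mul_assoc _ (θ : ℂ) I, exp_int_mul,
    (hasSum_logSeriesCoeff_mul_zpow hx hy hζ).tsum_eq, exp_add, exp_sum]
  congr! 2 with i - j - <;> apply exp_log_one_add_sub_log_one_sub <;> simp [hζ, hx, hy]

end LogSeriesCoeff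

/-- Let `φ(z) = ∏ᵢ (1+xᵢz)/(1-xᵢz) · ∏ⱼ (1+yⱼ/z)/(1-yⱼ/z)` on the
unit circle, and let `a : ℤ → ℂ` be the Fourier coefficients of `log φ`
(encoded by: `a` is absolutely summable and `exp(∑ₖ aₖ e^{ikθ}) = φ(e^{iθ})`
for all real `θ`). Then `∑_{k ≥ 1} k a_k a_{-k} = 2 ∑ᵢ∑ⱼ log((1+xᵢyⱼ)/(1-xᵢyⱼ))`. -/
theorem szego_constant_for_phi {M N : ℕ} (x : Fin M → ℝ) (y : Fin N → ℝ)
    (hx : ∀ i, 0 < x i ∧ x i < 1) (hy : ∀ j, 0 < y j ∧ y j < 1)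
    (a : ℤ → ℂ) (ha : Summable fun k => ‖a k‖)
    (hlog : ∀ θ : ℝ,
      Complex.exp (∑' k : ℤ, a k * Complex.exp ((k : ℂ) * (θ : ℂ) * Complex.I))
        = (∏ i, (1 + (x i : ℂ) * Complex.exp ((θ : ℂ) * Complex.I))
              / (1 - (x i : ℂ) * Complex.exp ((θ : ℂ) * Complex.I)))
          * ∏ j, (1 + (y j : ℂ) * (Complex.exp ((θ : ℂ) * Complex.I))⁻¹)
              / (1 - (y j : ℂ) * (Complex.exp ((θ : ℂ) * Complex.I))⁻¹)) :
    ∑' k : ℕ, ((k : ℂ) + 1) * a ((k : ℤ) + 1) * a (-((k : ℤ) + 1))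
      = ((2 * ∑ i, ∑ j, Real.log ((1 + x i * y j) / (1 - x i * y j)) : ℝ) : ℂ) := by
  have hx' (i : Fin M) : ‖(x i : ℂ)‖ < 1 := by
    rw [norm_real, Real.norm_of_nonneg (hx i).1.le]; exact (hx i).2
  have hy' (j : Fin N) : ‖(y j : ℂ)‖ < 1 := by
    rw [norm_real, Real.norm_of_nonneg (hy j).1.le]; exact (hy j).2
  have hab (k : ℤ) (hk : k ≠ 0) :
      a k = logSeriesCoeff (fun i => (x i : ℂ)) (fun j => (y j : ℂ)) k :=
    eq_of_exp_trigSeries_eq ha (summable_norm_logSeriesCoeff hx' hy')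
      (fun θ => (hlog θ).trans (exp_trigSeries_logSeriesCoeff hx' hy' θ).symm) hk
  have hsum := (hasSum_nat_add_iff (f := fun n : ℕ =>
      n * logCoeff (fun i => (x i : ℂ)) n * logCoeff (fun j => (y j : ℂ)) n) 1).mpr
    (by simpa using hasSum_natCast_mul_logCoeff_mul_logCoeff hx' hy')
  convert hsum.tsum_eq using 1
  · refine tsum_congr fun k => ?_
    rw [hab _ (by omega), hab _ (by omega), ← Nat.cast_add_one (R := ℤ),
      logSeriesCoeff_natCast, logSeriesCoeff_neg_natCast, Nat.cast_add_one]
  · have hxy (i : Fin M) (j : Fin N) : |x i * y j| < 1 := by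
      rw [abs_of_pos (mul_pos (hx i).1 (hy j).1)]
      exact mul_lt_one_of_nonneg_of_lt_one_left (hx i).1.le (hx i).2 (hy j).2.le
    push_cast [ofReal_log_div_one_add_one_sub (hxy _ _), Finset.sum_sub_distrib]
    rfl
end

section
/- Let $0 < \alpha < 1$ and $\alpha^2 < \tau < \alpha^{-2}$. Define $G(z) = \frac{\tau(1+\alpha^2 z^2)}{(1-\alpha^2 z^2)^2} - \frac{\alpha^2 + z^2}{(z^2-\alpha^2)^2}$ for $z \in (\alpha, \alpha^{-1})$. Then $G$ is strictly increasing on $(\alpha, \alpha^{-1})$, tends to $-\infty$ as $z \to \alpha^+$ and to $+\infty$ as $z \to (\alpha^{-1})^-$, and hence there exists a unique $z_0 \in (\alpha, \alpha^{-1})$ with $G(z_0) = 0$. -/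
open Filter

/-- The function `G(z) = τ(1+α²z²)/(1-α²z²)² - (α²+z²)/(z²-α²)²`. -/
noncomputable def saddleG (α τ z : ℝ) : ℝ :=
  τ * (1 + α ^ 2 * z ^ 2) / (1 - α ^ 2 * z ^ 2) ^ 2 - (α ^ 2 + z ^ 2) / (z ^ 2 - α ^ 2) ^ 2

private lemma saddle_aux1 {τ u v : ℝ} (hτ : 0 < τ) (h0 : 0 ≤ u) (huv : u < v) (hv : v < 1) :
    τ * (1 + u) / (1 - u) ^ 2 < τ * (1 + v) / (1 - v) ^ 2 := by
  have h1 : (0:ℝ) < 1 - u := by linarith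
  have h2 : (0:ℝ) < 1 - v := by linarith
  rw [div_lt_div_iff₀ (pow_pos h1 2) (pow_pos h2 2)]
  nlinarith [mul_pos hτ (mul_pos (sub_pos.2 huv)
    (show (0:ℝ) < 3 - u - v - u*v by nlinarith))]

private lemma saddle_aux2 {c s t : ℝ} (hc : 0 < c) (hcs : c < s) (hst : s < t) :
    (c + t) / (t - c) ^ 2 < (c + s) / (s - c) ^ 2 := by
  rw [div_lt_div_iff₀ (pow_pos (by linarith) 2) (pow_pos (by linarith) 2)]
  nlinarith [mul_pos (sub_pos.2 hst)
    (show (0:ℝ) < c*(t+s) + s*t - 3*c^2 by nlinarith)]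

private lemma saddle_facts (α : ℝ) (h0 : 0 < α) {z : ℝ} (hz : z ∈ Set.Ioo α α⁻¹) :
    0 < z ∧ α ^ 2 < z ^ 2 ∧ α ^ 2 * z ^ 2 < 1 := by
  obtain ⟨ha, hb⟩ := hz
  have hz0 : 0 < z := h0.trans ha
  have hinv : α * α⁻¹ = 1 := mul_inv_cancel₀ h0.ne'
  have h2 : α * z < 1 := by
    calc α * z < α * α⁻¹ := by exact mul_lt_mul_of_pos_left hb h0
    _ = 1 := hinv
  exact ⟨hz0, by nlinarith, by nlinarith [mul_pos h0 hz0]⟩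

/-- For `0 < α < 1` and `α² < τ < α⁻²`, `G` is strictly increasing
on `(α, α⁻¹)`, tends to `-∞` at `α⁺` and `+∞` at `(α⁻¹)⁻`, and has a unique zero
`z₀` in `(α, α⁻¹)`. -/
theorem saddleG_strictMono_and_unique_zero (α τ : ℝ) (h0 : 0 < α) (h1 : α < 1)
    (ht1 : α ^ 2 < τ) (ht2 : τ < (α ^ 2)⁻¹) :
    StrictMonoOn (saddleG α τ) (Set.Ioo α α⁻¹)
    ∧ Tendsto (saddleG α τ) (nhdsWithin α (Set.Ioi α)) atBot
    ∧ Tendsto (saddleG α τ) (nhdsWithin α⁻¹ (Set.Iio α⁻¹)) atTop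
    ∧ ∃! z0 : ℝ, z0 ∈ Set.Ioo α α⁻¹ ∧ saddleG α τ z0 = 0 := by
  have hτ : 0 < τ := lt_trans (pow_pos h0 2) ht1
  have hi0 : 0 < α⁻¹ := inv_pos.2 h0
  have hinv : α * α⁻¹ = 1 := mul_inv_cancel₀ h0.ne'
  have hainv : 1 < α⁻¹ := by nlinarith [mul_pos (show (0:ℝ) < 1 - α by linarith) hi0]
  have haa' : α < α⁻¹ := h1.trans hainv
  have hα2 : α ^ 2 < 1 := by nlinarith
  have hα4 : α ^ 2 * α ^ 2 < 1 := by nlinarith [pow_pos h0 2]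
  -- strict monotonicity
  have hmono : StrictMonoOn (saddleG α τ) (Set.Ioo α α⁻¹) := by
    intro x hx y hy hxy
    obtain ⟨hx0, hx1, hx2⟩ := saddle_facts α h0 hx
    obtain ⟨hy0, hy1, hy2⟩ := saddle_facts α h0 hy
    have hxy2 : x ^ 2 < y ^ 2 := by nlinarith
    have hA := saddle_aux1 (u := α ^ 2 * x ^ 2) (v := α ^ 2 * y ^ 2) hτ (by positivity)
      (by nlinarith [pow_pos h0 2]) hy2
    have hB := saddle_aux2 (c := α ^ 2) (s := x ^ 2) (t := y ^ 2) (pow_pos h0 2) hx1 hxy2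
    unfold saddleG
    exact sub_lt_sub hA hB
  -- continuity on the open interval
  have hcont : ContinuousOn (saddleG α τ) (Set.Ioo α α⁻¹) := by
    intro z hz
    obtain ⟨hz0, hz1, hz2⟩ := saddle_facts α h0 hz
    have hc1 : ContinuousAt (fun z : ℝ => τ * (1 + α ^ 2 * z ^ 2)) z := by fun_prop
    have hc2 : ContinuousAt (fun z : ℝ => (1 - α ^ 2 * z ^ 2) ^ 2) z := by fun_prop
    have hc3 : ContinuousAt (fun z : ℝ => α ^ 2 + z ^ 2) z := by fun_prop
    have hc4 : ContinuousAt (fun z : ℝ => (z ^ 2 - α ^ 2) ^ 2) z := by fun_prop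
    have hne1 : (1 - α ^ 2 * z ^ 2) ^ 2 ≠ 0 := ne_of_gt (pow_pos (by linarith) 2)
    have hne2 : (z ^ 2 - α ^ 2) ^ 2 ≠ 0 := ne_of_gt (pow_pos (by linarith) 2)
    have hca : ContinuousAt (saddleG α τ) z := by
      unfold saddleG
      exact (hc1.div hc2 hne1).sub (hc3.div hc4 hne2)
    exact hca.continuousWithinAt
  -- tendsto atBot at α⁺
  have hbot : Tendsto (saddleG α τ) (nhdsWithin α (Set.Ioi α)) atBot := by
    have hAcont : Tendsto (fun z : ℝ => τ * (1 + α ^ 2 * z ^ 2) / (1 - α ^ 2 * z ^ 2) ^ 2)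
        (nhdsWithin α (Set.Ioi α))
        (nhds (τ * (1 + α ^ 2 * α ^ 2) / (1 - α ^ 2 * α ^ 2) ^ 2)) := by
      have hc1 : ContinuousAt (fun z : ℝ => τ * (1 + α ^ 2 * z ^ 2)) α := by fun_prop
      have hc2 : ContinuousAt (fun z : ℝ => (1 - α ^ 2 * z ^ 2) ^ 2) α := by fun_prop
      have hne1 : (1 - α ^ 2 * α ^ 2) ^ 2 ≠ 0 := ne_of_gt (pow_pos (by linarith) 2)
      exact ((hc1.div hc2 hne1).continuousWithinAt :)
    have hBtop : Tendsto (fun z : ℝ => (α ^ 2 + z ^ 2) / (z ^ 2 - α ^ 2) ^ 2)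
        (nhdsWithin α (Set.Ioi α)) atTop := by
      simp only [div_eq_mul_inv]
      apply Tendsto.pos_mul_atTop (C := α ^ 2 + α ^ 2) (by positivity)
      · exact (ContinuousAt.continuousWithinAt (by fun_prop))
      · apply tendsto_inv_nhdsGT_zero.comp
        rw [tendsto_nhdsWithin_iff]
        constructor
        · have hca : ContinuousAt (fun z : ℝ => (z ^ 2 - α ^ 2) ^ 2) α := by fun_prop
          have h : Tendsto (fun z : ℝ => (z ^ 2 - α ^ 2) ^ 2) (nhdsWithin α (Set.Ioi α))
              (nhds ((α ^ 2 - α ^ 2) ^ 2)) := hca.continuousWithinAt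
          simpa using h
        · filter_upwards [self_mem_nhdsWithin] with z hz
          have hz' : α < z := hz
          exact Set.mem_Ioi.2 (pow_pos (by nlinarith) 2)
    have heq : saddleG α τ = fun z => τ * (1 + α ^ 2 * z ^ 2) / (1 - α ^ 2 * z ^ 2) ^ 2 +
        (-((α ^ 2 + z ^ 2) / (z ^ 2 - α ^ 2) ^ 2)) := by
      funext z; rw [saddleG]; ring
    rw [heq]
    exact hAcont.add_atBot (tendsto_neg_atTop_atBot.comp hBtop)
  -- tendsto atTop at (α⁻¹)⁻
  have htop : Tendsto (saddleG α τ) (nhdsWithin α⁻¹ (Set.Iio α⁻¹)) atTop := by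
    have hii : α ^ 2 * (α ^ 2)⁻¹ = 1 := mul_inv_cancel₀ (pow_pos h0 2).ne'
    have hAtop : Tendsto (fun z : ℝ => τ * (1 + α ^ 2 * z ^ 2) / (1 - α ^ 2 * z ^ 2) ^ 2)
        (nhdsWithin α⁻¹ (Set.Iio α⁻¹)) atTop := by
      simp only [div_eq_mul_inv]
      apply Tendsto.pos_mul_atTop (C := τ * (1 + 1)) (by positivity)
      · have hca : ContinuousAt (fun z : ℝ => τ * (1 + α ^ 2 * z ^ 2)) α⁻¹ := by fun_prop
        have h : Tendsto (fun z : ℝ => τ * (1 + α ^ 2 * z ^ 2)) (nhdsWithin α⁻¹ (Set.Iio α⁻¹))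
            (nhds (τ * (1 + α ^ 2 * (α⁻¹) ^ 2))) := hca.continuousWithinAt
        simpa [hii] using h
      · apply tendsto_inv_nhdsGT_zero.comp
        rw [tendsto_nhdsWithin_iff]
        constructor
        · have hca : ContinuousAt (fun z : ℝ => (1 - α ^ 2 * z ^ 2) ^ 2) α⁻¹ := by fun_prop
          have h : Tendsto (fun z : ℝ => (1 - α ^ 2 * z ^ 2) ^ 2) (nhdsWithin α⁻¹ (Set.Iio α⁻¹))
              (nhds ((1 - α ^ 2 * (α⁻¹) ^ 2) ^ 2)) := hca.continuousWithinAt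
          simpa [hii] using h
        · have hmem : Set.Ioi (0:ℝ) ∈ nhds α⁻¹ := isOpen_Ioi.mem_nhds hi0
          filter_upwards [self_mem_nhdsWithin, mem_nhdsWithin_of_mem_nhds hmem] with z hz1 hz2
          have hz' : z < α⁻¹ := hz1
          have hz0 : 0 < z := hz2
          have h2 : α * z < 1 := by
            calc α * z < α * α⁻¹ := by exact mul_lt_mul_of_pos_left hz' h0
            _ = 1 := hinv
          exact Set.mem_Ioi.2 (pow_pos (by nlinarith [mul_pos h0 hz0]) 2)
    have hBcont : Tendsto (fun z : ℝ => (α ^ 2 + z ^ 2) / (z ^ 2 - α ^ 2) ^ 2)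
        (nhdsWithin α⁻¹ (Set.Iio α⁻¹))
        (nhds ((α ^ 2 + (α⁻¹) ^ 2) / ((α⁻¹) ^ 2 - α ^ 2) ^ 2)) := by
      have hgt : α ^ 2 < (α⁻¹) ^ 2 := by nlinarith
      have hc3 : ContinuousAt (fun z : ℝ => α ^ 2 + z ^ 2) α⁻¹ := by fun_prop
      have hc4 : ContinuousAt (fun z : ℝ => (z ^ 2 - α ^ 2) ^ 2) α⁻¹ := by fun_prop
      have hne2 : ((α⁻¹) ^ 2 - α ^ 2) ^ 2 ≠ 0 := ne_of_gt (pow_pos (by linarith) 2)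
      exact ((hc3.div hc4 hne2).continuousWithinAt :)
    have heq : saddleG α τ = fun z => τ * (1 + α ^ 2 * z ^ 2) / (1 - α ^ 2 * z ^ 2) ^ 2 +
        (-((α ^ 2 + z ^ 2) / (z ^ 2 - α ^ 2) ^ 2)) := by
      funext z; rw [saddleG]; ring
    rw [heq]
    exact hAtop.atTop_add hBcont.neg
  refine ⟨hmono, hbot, htop, ?_⟩
  -- existence of points with negative / positive value
  have hIooA : Set.Ioo α α⁻¹ ∈ nhdsWithin α (Set.Ioi α) := by
    rw [show Set.Ioo α α⁻¹ = Set.Ioi α ∩ Set.Iio α⁻¹ from rfl]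
    exact Filter.inter_mem self_mem_nhdsWithin
      (mem_nhdsWithin_of_mem_nhds (Iio_mem_nhds haa'))
  have hIooB : Set.Ioo α α⁻¹ ∈ nhdsWithin α⁻¹ (Set.Iio α⁻¹) := by
    rw [show Set.Ioo α α⁻¹ = Set.Ioi α ∩ Set.Iio α⁻¹ from rfl]
    exact Filter.inter_mem (mem_nhdsWithin_of_mem_nhds (Ioi_mem_nhds haa'))
      self_mem_nhdsWithin
  obtain ⟨a, ha, hGa⟩ : ∃ a, a ∈ Set.Ioo α α⁻¹ ∧ saddleG α τ a < 0 := by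
    have h2 : ∀ᶠ z in nhdsWithin α (Set.Ioi α), z ∈ Set.Ioo α α⁻¹ := hIooA
    exact (h2.and (hbot.eventually (eventually_lt_atBot (0:ℝ)))).exists
  obtain ⟨b, hb, hGb⟩ : ∃ b, b ∈ Set.Ioo α α⁻¹ ∧ 0 < saddleG α τ b := by
    have h2 : ∀ᶠ z in nhdsWithin α⁻¹ (Set.Iio α⁻¹), z ∈ Set.Ioo α α⁻¹ := hIooB
    exact (h2.and (htop.eventually (eventually_gt_atTop (0:ℝ)))).exists
  have hab : a < b := by
    rcases lt_trichotomy a b with h | h | h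
    · exact h
    · rw [h] at hGa; linarith
    · have := hmono hb ha h; linarith
  have hsub : Set.Icc a b ⊆ Set.Ioo α α⁻¹ := fun z hz =>
    ⟨lt_of_lt_of_le ha.1 hz.1, lt_of_le_of_lt hz.2 hb.2⟩
  obtain ⟨z0, hz0m, hz0eq⟩ := intermediate_value_Icc hab.le (hcont.mono hsub)
    ⟨hGa.le, hGb.le⟩
  refine ⟨z0, ⟨hsub hz0m, hz0eq⟩, ?_⟩
  rintro w ⟨hw, hweq⟩
  exact hmono.injOn hw (hsub hz0m) (by rw [hweq, hz0eq])
end
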